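/- Let A₀ : X₀ → Y₀, A₁ : X₁ → Y₁ be nonzero operators, ε > 0, ξ a limit ordinal, K₀ ⊆ B_{Y₀*} and K₁ ⊆ B_{Y₁*} weak*-compact, and M ⊆ [0, ξ) cofinal. Then ⋂_{ζ∈M} [⟨K₀⟩_{A₀,ε}^ζ, K₁] ⊆ [⟨K₀⟩_{A₀,ε}^ξ, K₁], where [K, L] = {y₀* ⊗ y₁* : y₀* ∈ K, y₁* ∈ L} ⊆ (Y₀ ⊗̂_ε Y₁)*. -/

import Mathlib

/-!
A tensor `u` lying in `[⟨K₀⟩^ζ, K₁]` for every `ζ ∈ M` has, for each such `ζ`, a factorization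
`u = f ⊗ g` with `(f, g)` in the weak*-compact set `⟨K₀⟩^ζ × K₁`. The set of factorizations of `u`
is weak*-closed, because evaluation of `f ⊗ g` at `(y₀, y₁)` is weak*-continuous in `(f, g)`.
Since the derived sets decrease, these compact sets of factorizations form a directed family, so
some pair `(f, g)` factors `u` at every `ζ ∈ M`, and by cofinality `f ∈ ⟨K₀⟩^ξ`.
-/

namespace PaperAUS

/-- Szlenk derivation: points of `K` every weak*-neighborhood of which has
norm-diameter greater than `ε`. -/
def szDeriv {X : Type*} [NormedAddCommGroup X] [NormedSpace ℝ X]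
    (K : Set (WeakDual ℝ X)) (ε : ℝ) : Set (WeakDual ℝ X) :=
  {x ∈ K | ∀ V ∈ nhds x, ∃ y ∈ V ∩ K, ∃ z ∈ V ∩ K,
    ε < ‖WeakDual.toStrongDual y - WeakDual.toStrongDual z‖}

/-- The `B`-relative Szlenk-type derivation `⟨K⟩_{B,ε}`. -/
def szDerivB {E F : Type*} [NormedAddCommGroup E] [NormedSpace ℝ E]
    [NormedAddCommGroup F] [NormedSpace ℝ F] (B : E →L[ℝ] F)
    (K : Set (WeakDual ℝ F)) (ε : ℝ) : Set (WeakDual ℝ F) :=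
  {f ∈ K | ∀ V ∈ nhds f, ∃ g ∈ V ∩ K, ∃ h ∈ V ∩ K,
    ε < ‖(WeakDual.toStrongDual g).comp B - (WeakDual.toStrongDual h).comp B‖}

/-- Transfinite iterates `⟨K⟩_{B,ε}^ξ`. -/
noncomputable def szDerivBIter {E F : Type*} [NormedAddCommGroup E] [NormedSpace ℝ E]
    [NormedAddCommGroup F] [NormedSpace ℝ F] (B : E →L[ℝ] F)
    (K : Set (WeakDual ℝ F)) (ε : ℝ) (ξ : Ordinal) : Set (WeakDual ℝ F) :=
  Ordinal.limitRecOn ξ K (fun _ ih => szDerivB B ih ε)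
    (fun o _ ih => ⋂ ζ : Set.Iio o, ih ζ ζ.2)

end PaperAUS
namespace PaperAUS

/-- `[K₀, K₁]`: the set of elementary tensors `y₀* ⊗ y₁*` with `y₀* ∈ K₀`, `y₁* ∈ K₁`,
realized as operator-valued bilinear maps (so that the norm is the injective tensor norm). -/
noncomputable def elemTensorSet {Y₀ Y₁ : Type*} [NormedAddCommGroup Y₀] [NormedSpace ℝ Y₀]
    [NormedAddCommGroup Y₁] [NormedSpace ℝ Y₁]
    (K₀ : Set (WeakDual ℝ Y₀)) (K₁ : Set (WeakDual ℝ Y₁)) :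
    Set (Y₀ →L[ℝ] (Y₁ →L[ℝ] ℝ)) :=
  {u | ∃ f ∈ K₀, ∃ g ∈ K₁,
    u = (WeakDual.toStrongDual f).smulRight (WeakDual.toStrongDual g)}

end PaperAUS

open Set

theorem iInter_image_subset_image_iInter_of_isCompact {X Y ι : Type*} [TopologicalSpace X]
    [T2Space X] [Nonempty ι] {F : ι → Set X} (hF : ∀ i, IsCompact (F i))
    (hdir : Directed (· ⊇ ·) F) {φ : X → Y} (hφ : ∀ y, IsClosed (φ ⁻¹' {y})) :
    ⋂ i, φ '' F i ⊆ φ '' ⋂ i, F i := by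
  intro y hy
  have hfibre_dir : Directed (· ⊇ ·) fun i => F i ∩ φ ⁻¹' {y} := fun i j =>
    let ⟨k, hki, hkj⟩ := hdir i j
    ⟨k, inter_subset_inter_left _ hki, inter_subset_inter_left _ hkj⟩
  have hfibre_ne : ∀ i, (F i ∩ φ ⁻¹' {y}).Nonempty := fun i =>
    let ⟨x, hx, hxy⟩ := mem_iInter.1 hy i
    ⟨x, hx, hxy⟩
  have hfibre_compact : ∀ i, IsCompact (F i ∩ φ ⁻¹' {y}) := fun i =>
    (hF i).inter_right (hφ y)
  obtain ⟨x, hx⟩ := IsCompact.nonempty_iInter_of_directed_nonempty_isCompact_isClosed _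
    hfibre_dir hfibre_ne hfibre_compact fun i => (hfibre_compact i).isClosed
  obtain ⟨hxF, hxy⟩ := iInter_inter_distrib _ _ ▸ hx
  exact ⟨x, hxF, mem_iInter.1 hxy (Classical.arbitrary ι)⟩

namespace PaperAUS

section Derivation

variable {E F : Type*} [NormedAddCommGroup E] [NormedSpace ℝ E]
  [NormedAddCommGroup F] [NormedSpace ℝ F] (B : E →L[ℝ] F) (K : Set (WeakDual ℝ F)) (ε : ℝ)

theorem szDerivB_subset : szDerivB B K ε ⊆ K := fun _ hf => hf.1

theorem isClosed_szDerivB (hK : IsClosed K) : IsClosed (szDerivB B K ε) := by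
  refine isClosed_of_closure_subset fun f hf => ?_
  refine ⟨hK.closure_subset (closure_mono (szDerivB_subset B K ε) hf), fun V hV => ?_⟩
  obtain ⟨W, hWV, hW, hfW⟩ := mem_nhds_iff.1 hV
  obtain ⟨f', hf'W, hf'⟩ := mem_closure_iff.1 hf W hW hfW
  obtain ⟨g, hg, h, hh, hgh⟩ := hf'.2 W (hW.mem_nhds hf'W)
  exact ⟨g, ⟨hWV hg.1, hg.2⟩, h, ⟨hWV hh.1, hh.2⟩, hgh⟩

theorem szDerivBIter_zero : szDerivBIter B K ε 0 = K :=
  Ordinal.limitRecOn_zero _ _ _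

theorem szDerivBIter_add_one (ζ : Ordinal) :
    szDerivBIter B K ε (ζ + 1) = szDerivB B (szDerivBIter B K ε ζ) ε :=
  Ordinal.limitRecOn_add_one _ _ _ _

theorem szDerivBIter_limit {ξ : Ordinal} (hξ : Order.IsSuccLimit ξ) :
    szDerivBIter B K ε ξ = ⋂ ζ : Iio ξ, szDerivBIter B K ε ζ :=
  Ordinal.limitRecOn_limit _ _ _ _ hξ

theorem szDerivBIter_antitone : Antitone (szDerivBIter B K ε) := by
  intro ζ ξ hζξ
  change szDerivBIter B K ε ξ ⊆ szDerivBIter B K ε ζ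
  induction ξ using Ordinal.limitRecOn generalizing ζ with
  | zero => rw [nonpos_iff_eq_zero.1 hζξ]
  | add_one o ih =>
    rcases hζξ.eq_or_lt with rfl | hlt
    · rfl
    rw [szDerivBIter_add_one]
    exact (szDerivB_subset B _ ε).trans (ih (Order.lt_add_one_iff.1 hlt))
  | limit o ho _ =>
    rcases hζξ.eq_or_lt with rfl | hlt
    · rfl
    rw [szDerivBIter_limit B K ε ho]
    exact iInter_subset (fun η : Iio o => szDerivBIter B K ε η) ⟨ζ, hlt⟩

theorem szDerivBIter_subset (ζ : Ordinal) : szDerivBIter B K ε ζ ⊆ K :=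
  (szDerivBIter_antitone B K ε bot_le).trans (szDerivBIter_zero B K ε).subset

theorem isClosed_szDerivBIter (hK : IsClosed K) (ξ : Ordinal) :
    IsClosed (szDerivBIter B K ε ξ) := by
  induction ξ using Ordinal.limitRecOn with
  | zero => rwa [szDerivBIter_zero]
  | add_one o ih =>
    rw [szDerivBIter_add_one]
    exact isClosed_szDerivB B _ ε ih
  | limit o ho ih =>
    rw [szDerivBIter_limit B K ε ho]
    exact isClosed_iInter fun ζ => ih ζ ζ.2

theorem isCompact_szDerivBIter (hK : IsCompact K) (ξ : Ordinal) :
    IsCompact (szDerivBIter B K ε ξ) :=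
  hK.of_isClosed_subset (isClosed_szDerivBIter B K ε hK.isClosed ξ) (szDerivBIter_subset B K ε ξ)

theorem biInter_szDerivBIter_subset_of_cofinal {ξ : Ordinal} (hξ : Order.IsSuccLimit ξ)
    {M : Set Ordinal} (hcof : ∀ ζ < ξ, ∃ η ∈ M, ζ ≤ η) :
    ⋂ ζ ∈ M, szDerivBIter B K ε ζ ⊆ szDerivBIter B K ε ξ := by
  rw [szDerivBIter_limit B K ε hξ]
  refine subset_iInter fun ⟨ζ, hζ⟩ => ?_
  obtain ⟨η, hηM, hζη⟩ := hcof ζ hζ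
  exact (biInter_subset_of_mem hηM).trans (szDerivBIter_antitone B K ε hζη)

end Derivation

section ElementaryTensor

variable {Y₀ Y₁ : Type*} [NormedAddCommGroup Y₀] [NormedSpace ℝ Y₀]
  [NormedAddCommGroup Y₁] [NormedSpace ℝ Y₁]

noncomputable def elemTensor (p : WeakDual ℝ Y₀ × WeakDual ℝ Y₁) : Y₀ →L[ℝ] Y₁ →L[ℝ] ℝ :=
  (WeakDual.toStrongDual p.1).smulRight (WeakDual.toStrongDual p.2)

theorem elemTensorSet_eq_image (K₀ : Set (WeakDual ℝ Y₀)) (K₁ : Set (WeakDual ℝ Y₁)) :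
    elemTensorSet K₀ K₁ = elemTensor '' (K₀ ×ˢ K₁) := by
  ext u
  simp only [elemTensorSet, elemTensor, mem_image, mem_prod, Prod.exists]
  grind

theorem isClosed_elemTensor_preimage_singleton (u : Y₀ →L[ℝ] Y₁ →L[ℝ] ℝ) :
    IsClosed (elemTensor ⁻¹' {u} : Set (WeakDual ℝ Y₀ × WeakDual ℝ Y₁)) := by
  let evalPair : WeakDual ℝ Y₀ × WeakDual ℝ Y₁ → Y₀ → Y₁ → ℝ := fun p y₀ y₁ => p.1 y₀ * p.2 y₁
  have hcont : Continuous evalPair := continuous_pi fun y₀ => continuous_pi fun y₁ =>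
    ((WeakDual.eval_continuous y₀).comp continuous_fst).mul
      ((WeakDual.eval_continuous y₁).comp continuous_snd)
  have hfibre : elemTensor ⁻¹' {u} = evalPair ⁻¹' {fun y₀ y₁ => u y₀ y₁} := by
    ext p
    simp only [mem_preimage, mem_singleton_iff, ContinuousLinearMap.ext_iff, funext_iff,
      elemTensor, evalPair, ContinuousLinearMap.smulRight_apply]
    rfl
  exact hfibre ▸ isClosed_singleton.preimage hcont

end ElementaryTensor

theorem iInter_elemTensorSet_subset_general {X₀ Y₀ Y₁ : Type*}
    [NormedAddCommGroup X₀] [NormedSpace ℝ X₀] [NormedAddCommGroup Y₀] [NormedSpace ℝ Y₀]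
    [NormedAddCommGroup Y₁] [NormedSpace ℝ Y₁]
    (A₀ : X₀ →L[ℝ] Y₀)
    (ε : ℝ) (ξ : Ordinal) (hξ : Order.IsSuccLimit ξ)
    (K₀ : Set (WeakDual ℝ Y₀)) (hK₀c : IsCompact K₀)
    (K₁ : Set (WeakDual ℝ Y₁)) (hK₁c : IsCompact K₁)
    (M : Set Ordinal) (hcof : ∀ ζ < ξ, ∃ η ∈ M, ζ ≤ η) :
    ⋂ ζ ∈ M, elemTensorSet (szDerivBIter A₀ K₀ ε ζ) K₁ ⊆
      elemTensorSet (szDerivBIter A₀ K₀ ε ξ) K₁ := by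
  obtain ⟨η, hηM, -⟩ := hcof 0 hξ.pos
  have : Nonempty M := ⟨⟨η, hηM⟩⟩
  let F : M → Set (WeakDual ℝ Y₀ × WeakDual ℝ Y₁) := fun ζ => szDerivBIter A₀ K₀ ε ζ ×ˢ K₁
  have hF_compact : ∀ ζ, IsCompact (F ζ) := fun ζ =>
    (isCompact_szDerivBIter A₀ K₀ ε hK₀c ζ).prod hK₁c
  have hF_dir : Directed (· ⊇ ·) F := Antitone.directed_ge fun ζ ζ' h =>
    prod_mono (szDerivBIter_antitone A₀ K₀ ε h) subset_rfl
  have hF_inter : ⋂ ζ, F ζ ⊆ szDerivBIter A₀ K₀ ε ξ ×ˢ K₁ := fun p hp =>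
    ⟨biInter_szDerivBIter_subset_of_cofinal A₀ K₀ ε hξ hcof
        (mem_iInter₂.2 fun ζ hζ => (mem_iInter.1 hp ⟨ζ, hζ⟩).1),
      (mem_iInter.1 hp ⟨η, hηM⟩).2⟩
  simp only [elemTensorSet_eq_image, biInter_eq_iInter]
  exact (iInter_image_subset_image_iInter_of_isCompact hF_compact hF_dir
    isClosed_elemTensor_preimage_singleton).trans (image_mono hF_inter)

/-- at a limit ordinal `ξ`, elementary tensors lying in `[⟨K₀⟩^ζ, K₁]` for
cofinally many `ζ < ξ` lie in `[⟨K₀⟩^ξ, K₁]`. -/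
theorem iInter_elemTensorSet_subset {X₀ Y₀ X₁ Y₁ : Type*}
    [NormedAddCommGroup X₀] [NormedSpace ℝ X₀] [NormedAddCommGroup Y₀] [NormedSpace ℝ Y₀]
    [NormedAddCommGroup X₁] [NormedSpace ℝ X₁] [NormedAddCommGroup Y₁] [NormedSpace ℝ Y₁]
    (A₀ : X₀ →L[ℝ] Y₀) (A₁ : X₁ →L[ℝ] Y₁) (h₀ : A₀ ≠ 0) (h₁ : A₁ ≠ 0)
    (ε : ℝ) (hε : 0 < ε) (ξ : Ordinal) (hξ : Order.IsSuccLimit ξ)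
    (K₀ : Set (WeakDual ℝ Y₀)) (hK₀c : IsCompact K₀)
    (hK₀b : ∀ f ∈ K₀, ‖WeakDual.toStrongDual f‖ ≤ 1)
    (K₁ : Set (WeakDual ℝ Y₁)) (hK₁c : IsCompact K₁)
    (hK₁b : ∀ f ∈ K₁, ‖WeakDual.toStrongDual f‖ ≤ 1)
    (M : Set Ordinal) (hM : M ⊆ Set.Iio ξ) (hcof : ∀ ζ < ξ, ∃ η ∈ M, ζ ≤ η) :
    ⋂ ζ ∈ M, elemTensorSet (szDerivBIter A₀ K₀ ε ζ) K₁ ⊆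
      elemTensorSet (szDerivBIter A₀ K₀ ε ξ) K₁ :=
  iInter_elemTensorSet_subset_general A₀ ε ξ hξ K₀ hK₀c K₁ hK₁c M hcof

end PaperAUS
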